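/- arXiv:1204.0829 — 8 statements merged into one kernel-verified Lean document; each statement's English description precedes it below -/
import Mathlib

section
/- Let G be a countable group acting by Borel automorphisms on a standard Borel space X. If X is compressible, i.e., X is equidecomposable with a Borel subset B ⊆ X such that X \ B meets every orbit, then there is no G-invariant Borel probability measure on X. -/
/-!
An invariant probability measure gives `B` the same mass as `X`, by countable additivity
across the pieces of the equidecomposition, so `X \ B` is null; but countably many translates
of `X \ B` cover `X`, which then has measure zero as well.
-/

open MeasureTheory Pointwise

section

variable {G X : Type*} [Group G] [MulAction G X] [MeasurableSpace X] {μ : Measure X}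

theorem measure_iUnion_eq_of_smul_pieces (hinv : ∀ (g : G) (S : Set X), μ (g • S) = μ S)
    {Xn Bn : ℕ → Set X} {g : ℕ → G}
    (hXnm : ∀ n, MeasurableSet (Xn n)) (hBnm : ∀ n, MeasurableSet (Bn n))
    (hXd : Pairwise (Function.onFun Disjoint Xn)) (hBd : Pairwise (Function.onFun Disjoint Bn))
    (hg : ∀ n, g n • Xn n = Bn n) :
    μ (⋃ n, Bn n) = μ (⋃ n, Xn n) := by
  rw [measure_iUnion hBd hBnm, measure_iUnion hXd hXnm]
  exact tsum_congr fun n => by rw [← hg n, hinv]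

theorem measure_univ_eq_zero_of_iUnion_smul_eq_univ [Countable G]
    (hinv : ∀ (g : G) (S : Set X), μ (g • S) = μ S) {N : Set X} (hN : μ N = 0)
    (hsat : (⋃ g : G, g • N) = Set.univ) :
    μ Set.univ = 0 := by
  rw [← hsat]
  exact measure_iUnion_null fun g => by rw [hinv, hN]

end

theorem stmt_1_general {G X : Type*} [Group G] [Countable G]
    [MeasurableSpace X] [MulAction G X]
    (B : Set X) (hB : MeasurableSet B)
    (Xn Bn : ℕ → Set X) (g : ℕ → G)
    (hXnm : ∀ n, MeasurableSet (Xn n)) (hBnm : ∀ n, MeasurableSet (Bn n))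
    (hXd : Pairwise (Function.onFun Disjoint Xn))
    (hBd : Pairwise (Function.onFun Disjoint Bn))
    (hXU : (⋃ n, Xn n) = Set.univ) (hBU : (⋃ n, Bn n) = B)
    (hg : ∀ n, g n • Xn n = Bn n)
    (hsat : (⋃ g : G, g • Bᶜ) = Set.univ) :
    ¬ ∃ μ : Measure X, IsProbabilityMeasure μ ∧ ∀ (g : G) (S : Set X), μ (g • S) = μ S := by
  rintro ⟨μ, hμ, hinv⟩
  have hB_full : μ B = 1 := by
    rw [← hBU, measure_iUnion_eq_of_smul_pieces hinv hXnm hBnm hXd hBd hg, hXU, measure_univ]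
  have hBc_null : μ Bᶜ = 0 := by
    rw [measure_compl hB (measure_ne_top μ B), hB_full, measure_univ, tsub_self]
  simpa using measure_univ_eq_zero_of_iUnion_smul_eq_univ hinv hBc_null hsat

/-- If a standard Borel `G`-space `X` is compressible, i.e. `X` is
(Borel) equidecomposable with a Borel subset `B ⊆ X` such that `X \ B` meets every
orbit (its `G`-saturation is all of `X`), then there is no `G`-invariant Borel
probability measure on `X`. -/
theorem stmt_1 {G X : Type*} [Group G] [Countable G]
    [MeasurableSpace X] [StandardBorelSpace X] [MulAction G X]
    (hact : ∀ g : G, Measurable fun x : X => g • x)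
    (B : Set X) (hB : MeasurableSet B)
    (Xn Bn : ℕ → Set X) (g : ℕ → G)
    (hXnm : ∀ n, MeasurableSet (Xn n)) (hBnm : ∀ n, MeasurableSet (Bn n))
    (hXd : Pairwise (Function.onFun Disjoint Xn))
    (hBd : Pairwise (Function.onFun Disjoint Bn))
    (hXU : (⋃ n, Xn n) = Set.univ) (hBU : (⋃ n, Bn n) = B)
    (hg : ∀ n, g n • Xn n = Bn n)
    (hsat : (⋃ g : G, g • Bᶜ) = Set.univ) :
    ¬ ∃ μ : Measure X, IsProbabilityMeasure μ ∧ ∀ (g : G) (S : Set X), μ (g • S) = μ S :=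
  stmt_1_general B hB Xn Bn g hXnm hBnm hXd hBd hXU hBU hg hsat
end

section
/- Let F = {n_0 < n_1 < ... < n_{k-1}} ⊆ ℤ be a d-syndetic set (i.e., n_{i+1} − n_i ≤ d for all i < k−1) of length ||F|| = n_{k-1} − n_0, with d ≥ 1. Let H ⊆ ℤ with |H| = d+1 and max(H) − min(H) < ||F|| + d. Then F is not weakly wandering with respect to H, i.e., there exist distinct h, h' ∈ H with (h + F) ∩ (h' + F) ≠ ∅. -/
/-!
Put `c = min H + max F`. For every `h ∈ H` the width bound places `c - h` in the range
`(min F - d, max F]`, and a `d`-syndetic set meets every window of `d` consecutive integers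
starting in that range; so each translate `h + F` meets the window `[c, c + d)`. These are
`d + 1` translates hitting `d` integers, and pigeonhole makes two of them collide.
-/

namespace Finset

/-- If `x ≤ min F`, take `min F`; otherwise the largest element of `F` below `x` has a
successor in `F` within distance `d`, which must lie in `[x, x + d)`. -/
lemma exists_mem_Ico_of_syndetic {d : ℕ} {F : Finset ℤ} (hF : F.Nonempty)
    (hsyn : ∀ m ∈ F, ∀ m' ∈ F, m < m' → ∃ m'' ∈ F, m < m'' ∧ m'' ≤ m + (d : ℤ))
    {x : ℤ} (hlo : F.min' hF - d < x) (hhi : x ≤ F.max' hF) :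
    ∃ a ∈ F, x ≤ a ∧ a < x + d := by
  by_cases hx : x ≤ F.min' hF
  · exact ⟨F.min' hF, F.min'_mem hF, hx, by omega⟩
  have hbelow : (F.filter (· < x)).Nonempty := ⟨F.min' hF, by simp [F.min'_mem hF]; omega⟩
  set p := (F.filter (· < x)).max' hbelow
  obtain ⟨hpF, hpx⟩ := mem_filter.mp ((F.filter (· < x)).max'_mem hbelow)
  obtain ⟨m, hmF, hpm, hmp⟩ := hsyn p hpF (F.max' hF) (F.max'_mem hF) (by omega)
  have hxm : x ≤ m := by
    by_contra! hmx
    have : m ≤ p := le_max' _ m (mem_filter.mpr ⟨hmF, hmx⟩)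
    omega
  exact ⟨m, hmF, hxm, by omega⟩

lemma exists_add_eq_add_of_card_lt {d : ℕ} {F H : Finset ℤ} (c : ℤ) (hcard : d < H.card)
    (hmeet : ∀ h ∈ H, ∃ a ∈ F, c ≤ h + a ∧ h + a < c + d) :
    ∃ h ∈ H, ∃ h' ∈ H, h ≠ h' ∧ ∃ a ∈ F, ∃ b ∈ F, h + a = h' + b := by
  choose! a haF hca hac using hmeet
  have hmaps : ∀ h ∈ H, h + a h ∈ Ico c (c + d) := fun h hh ↦
    mem_Ico.mpr ⟨hca h hh, hac h hh⟩
  have hlt : (Ico c (c + d)).card < H.card := by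
    rw [Int.card_Ico]
    omega
  obtain ⟨h, hh, h', hh', hne, heq⟩ := exists_ne_map_eq_of_card_lt_of_maps_to hlt hmaps
  exact ⟨h, hh, h', hh', hne, a h, haF h hh, a h', haF h' hh', heq⟩

end Finset

theorem stmt_5_general (d : ℕ) (F H : Finset ℤ)
    (hF : F.Nonempty)
    (hsyn : ∀ m ∈ F, ∀ m' ∈ F, m < m' → ∃ m'' ∈ F, m < m'' ∧ m'' ≤ m + (d : ℤ))
    (hH : H.Nonempty) (hcard : H.card = d + 1)
    (hwidth : H.max' hH - H.min' hH < (F.max' hF - F.min' hF) + (d : ℤ)) :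
    ∃ h ∈ H, ∃ h' ∈ H, h ≠ h' ∧ ∃ a ∈ F, ∃ b ∈ F, h + a = h' + b := by
  refine Finset.exists_add_eq_add_of_card_lt (d := d) (H.min' hH + F.max' hF) (by omega)
    fun h hh ↦ ?_
  have hmin := H.min'_le h hh
  have hmax := H.le_max' h hh
  obtain ⟨a, haF, hxa, hax⟩ := Finset.exists_mem_Ico_of_syndetic (d := d) hF hsyn
    (x := F.max' hF - (h - H.min' hH)) (by omega) (by omega)
  exact ⟨a, haF, by omega, by omega⟩

/-- Let `F ⊆ ℤ` be a finite nonempty `d`-syndetic set (any element below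
another element of `F` has a successor in `F` within distance `d`), of length
`max F - min F`, and let `H ⊆ ℤ` be finite with `|H| = d + 1` and
`max H - min H < (max F - min F) + d`. Then `F` is not weakly wandering with respect to
`H`: there are distinct `h, h' ∈ H` with `(h + F) ∩ (h' + F) ≠ ∅`. -/
theorem stmt_5 (d : ℕ) (hd : 1 ≤ d) (F H : Finset ℤ)
    (hF : F.Nonempty)
    (hsyn : ∀ m ∈ F, ∀ m' ∈ F, m < m' → ∃ m'' ∈ F, m < m'' ∧ m'' ≤ m + (d : ℤ))
    (hH : H.Nonempty) (hcard : H.card = d + 1)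
    (hwidth : H.max' hH - H.min' hH < (F.max' hF - F.min' hF) + (d : ℤ)) :
    ∃ h ∈ H, ∃ h' ∈ H, h ≠ h' ∧ ∃ a ∈ F, ∃ b ∈ F, h + a = h' + b :=
  stmt_5_general d F H hF hsyn hH hcard hwidth
end

section
/- Let T : X → X be a bijection of a set X and let A ⊆ X. Suppose A is weakly wandering with respect to an infinite set H ⊆ ℤ (i.e., the sets T^h(A), h ∈ H, are pairwise disjoint). Then for every d ∈ ℕ, s_A(d) + d ≤ w_H(d), where s_A(d) is the supremum of lengths of d-syndetic sets F ⊆ ℤ with ⋂_{n∈F} T^n(A) ≠ ∅, and w_H(d) = min{ max(H') − min(H') : H' ⊆ H, |H'| = d+1 }. -/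
/-- A finite nonempty set `F ⊆ ℤ` is `d`-syndetic if consecutive gaps are at most `d`:
every element of `F` having some element of `F` above it has a further element of `F`
within distance `d` above it. -/
def IsSyndetic (d : ℕ) (F : Finset ℤ) : Prop :=
  F.Nonempty ∧ ∀ m ∈ F, ∀ m' ∈ F, m < m' → ∃ m'' ∈ F, m < m'' ∧ m'' ≤ m + (d : ℤ)

/-- The length `max F - min F` of a finite set `F ⊆ ℤ` (junk value `0` if `F = ∅`). -/
noncomputable def synLen (F : Finset ℤ) : ℤ :=
  if h : F.Nonempty then F.max' h - F.min' h else 0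

/-!
Suppose `F` is `d`-syndetic, `T^n x ∈ A` for all `n ∈ F`, and `H'` has `d + 1` elements with
`max F - min F + d > max H' - min H'`. Shifting `H'` so that its minimum sits at `min F`, every
point `a` of the shifted set lies in `[min F, max F + d)`, so some `n ∈ F` satisfies
`0 ≤ a - n < d`. By pigeonhole two elements `h ≠ h'` of `H'` produce the same offset, i.e.
`h + n' = h' + n` with `n, n' ∈ F`, and then `T^(h + n') x` lies in both `T^h A` and `T^h' A`.
So `A` cannot be weakly wandering along `H'`.
-/

theorem synLen_eq_max'_sub_min' {F : Finset ℤ} (hF : F.Nonempty) :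
    synLen F = F.max' hF - F.min' hF :=
  dif_pos hF

theorem synLen_nonneg (F : Finset ℤ) : 0 ≤ synLen F := by
  by_cases hF : F.Nonempty
  · rw [synLen_eq_max'_sub_min' hF]
    linarith [F.min'_le_max' hF]
  · simp [synLen, hF]

theorem card_le_synLen_add_one {F : Finset ℤ} (hF : F.Nonempty) :
    (F.card : ℤ) ≤ synLen F + 1 := by
  have hsub : F ⊆ Finset.Icc (F.min' hF) (F.max' hF) :=
    fun y hy => Finset.mem_Icc.mpr ⟨F.min'_le y hy, F.le_max' y hy⟩
  have hcard := Finset.card_le_card hsub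
  rw [Int.card_Icc] at hcard
  rw [synLen_eq_max'_sub_min' hF]
  have := F.min'_le_max' hF
  omega

theorem IsSyndetic.exists_mem_le_lt_add {d : ℕ} {F : Finset ℤ} (hF : IsSyndetic d F) {a : ℤ}
    (hmin : F.min' hF.1 ≤ a) (hmax : a < F.max' hF.1 + d) :
    ∃ n ∈ F, n ≤ a ∧ a < n + d := by
  set G := F.filter (· ≤ a)
  have hG : G.Nonempty := ⟨_, Finset.mem_filter.mpr ⟨F.min'_mem hF.1, hmin⟩⟩
  obtain ⟨hnF, hna⟩ := Finset.mem_filter.mp (G.max'_mem hG)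
  refine ⟨G.max' hG, hnF, hna, ?_⟩
  rcases (F.le_max' _ hnF).eq_or_lt with heq | hlt
  · rwa [heq]
  · obtain ⟨m, hmF, hnm, hmle⟩ := hF.2 _ hnF _ (F.max'_mem hF.1) hlt
    have hma : a < m := lt_of_not_ge fun hma =>
      (G.le_max' m (Finset.mem_filter.mpr ⟨hmF, hma⟩)).not_gt hnm
    omega

theorem not_disjoint_image_zpow {X : Type*} (T : Equiv.Perm X) {A : Set X} {x : X} {n n' h h' : ℤ}
    (hn : (T ^ n) x ∈ A) (hn' : (T ^ n') x ∈ A) (hsum : h + n' = h' + n) :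
    ¬Disjoint ((T ^ h) '' A) ((T ^ h') '' A) := by
  refine Set.not_disjoint_iff.mpr ⟨(T ^ (h + n')) x, ?_, ?_⟩
  · rw [zpow_add]
    exact ⟨_, hn', rfl⟩
  · rw [hsum, zpow_add]
    exact ⟨_, hn, rfl⟩

theorem synLen_add_le_synLen_of_pairwise_disjoint {X : Type*} (T : Equiv.Perm X) {A : Set X}
    {d : ℕ} {F H' : Finset ℤ} (hF : IsSyndetic d F) {x : X} (hx : ∀ n ∈ F, (T ^ n) x ∈ A)
    (hcard : H'.card = d + 1)
    (hdisj : (H' : Set ℤ).Pairwise fun h h' => Disjoint ((T ^ h) '' A) ((T ^ h') '' A)) :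
    synLen F + d ≤ synLen H' := by
  have hH' : H'.Nonempty := Finset.card_pos.mp (by omega)
  by_contra! hlt
  rw [synLen_eq_max'_sub_min' hF.1, synLen_eq_max'_sub_min' hH'] at hlt
  have hnear : ∀ h ∈ H', ∃ n ∈ F, n ≤ F.min' hF.1 + (h - H'.min' hH') ∧
      F.min' hF.1 + (h - H'.min' hH') < n + d := fun h hh =>
    hF.exists_mem_le_lt_add (by linarith [H'.min'_le h hh]) (by linarith [H'.le_max' h hh])
  choose! n hnF hn using hnear
  have hmaps : ∀ h ∈ H', h - n h ∈ Finset.Ico (H'.min' hH' - F.min' hF.1)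
      (H'.min' hH' - F.min' hF.1 + d) := fun h hh => by
    obtain ⟨h₁, h₂⟩ := hn h hh
    exact Finset.mem_Ico.mpr ⟨by omega, by omega⟩
  have hlt_card : (Finset.Ico (H'.min' hH' - F.min' hF.1)
      (H'.min' hH' - F.min' hF.1 + d)).card < H'.card := by
    rw [Int.card_Ico]
    omega
  obtain ⟨h, hh, h', hh', hne, heq⟩ :=
    Finset.exists_ne_map_eq_of_card_lt_of_maps_to hlt_card hmaps
  exact not_disjoint_image_zpow T (hx _ (hnF h hh)) (hx _ (hnF h' hh')) (by omega)
    (hdisj hh hh' hne)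

theorem stmt_6_general {X : Type*} (T : Equiv.Perm X) (A : Set X) (H : Set ℤ)
    (hww : H.Pairwise fun h h' => Disjoint ((T ^ h) '' A) ((T ^ h') '' A))
    (d : ℕ) :
    sSup {l : ℕ∞ | ∃ F : Finset ℤ, IsSyndetic d F ∧
        (∃ x : X, ∀ n ∈ F, (T ^ n) x ∈ A) ∧ l = ((synLen F).toNat : ℕ∞)}
      + (d : ℕ∞) ≤
    sInf {w : ℕ∞ | ∃ H' : Finset ℤ, ↑H' ⊆ H ∧ H'.card = d + 1 ∧
        w = ((synLen H').toNat : ℕ∞)} := by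
  refine le_sInf ?_
  rintro _ ⟨H', hsub, hcard, rfl⟩
  have hd : d ≤ (synLen H').toNat := by
    have := card_le_synLen_add_one (Finset.card_pos.mp (by omega : 0 < H'.card))
    omega
  rw [← (ENat.addLECancellable_natCast d).le_tsub_iff_right (by exact_mod_cast hd),
    ← ENat.natCast_sub]
  refine sSup_le ?_
  rintro _ ⟨F, hF, ⟨x, hx⟩, rfl⟩
  have := synLen_add_le_synLen_of_pairwise_disjoint T hF hx hcard (hww.mono hsub)
  have := synLen_nonneg F
  exact_mod_cast (by omega : (synLen F).toNat ≤ (synLen H').toNat - d)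

/-- If `A ⊆ X` is weakly wandering with respect to an infinite `H ⊆ ℤ`
(for a `ℤ`-action given by a bijection `T`), then for every `d`,
`s_A(d) + d ≤ w_H(d)`, where `s_A(d)` is the supremum of lengths of `d`-syndetic sets
`F ⊆ ℤ` with `⋂_{n ∈ F} T^n(A) ≠ ∅` and
`w_H(d) = min { max H' - min H' : H' ⊆ H, |H'| = d + 1 }`. -/
theorem stmt_6 {X : Type*} (T : Equiv.Perm X) (A : Set X) (H : Set ℤ)
    (hH : H.Infinite)
    (hww : H.Pairwise fun h h' => Disjoint ((T ^ h) '' A) ((T ^ h') '' A))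
    (d : ℕ) :
    sSup {l : ℕ∞ | ∃ F : Finset ℤ, IsSyndetic d F ∧
        (∃ x : X, ∀ n ∈ F, (T ^ n) x ∈ A) ∧ l = ((synLen F).toNat : ℕ∞)}
      + (d : ℕ∞) ≤
    sInf {w : ℕ∞ | ∃ H' : Finset ℤ, ↑H' ⊆ H ∧ H'.card = d + 1 ∧
        w = ((synLen H').toNat : ℕ∞)} :=
  stmt_6_general T A H hww d
end

section
/- Let T : X → X be a bijection of a set X and A ⊆ X. If for some d ≥ 1 the set A contains arbitrarily long d-syndetic sets (i.e., for every l there is a d-syndetic set F ⊆ ℤ of length ≥ l with ⋂_{n∈F} T^n(A) ≠ ∅), then A is not weakly wandering: for every infinite H ⊆ ℤ the translates T^h(A), h ∈ H, are not pairwise disjoint. -/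
namespace IsSyndetic

variable {d : ℕ} {F : Finset ℤ}

theorem exists_mem_Ioc (hF : IsSyndetic d F) {a b t : ℤ} (ha : a ∈ F) (hb : b ∈ F)
    (hat : a ≤ t) (htb : t < b) : ∃ m ∈ F, m ∈ Set.Ioc t (t + d) := by
  set below := F.filter (· ≤ t)
  have hbelow : below.Nonempty := ⟨a, Finset.mem_filter.mpr ⟨ha, hat⟩⟩
  -- the next element of `F` after the last one `≤ t` is the witness
  obtain ⟨hmF, hmt⟩ := Finset.mem_filter.mp (below.max'_mem hbelow)
  obtain ⟨m', hm'F, hlt, hle⟩ := hF.2 _ hmF b hb (hmt.trans_lt htb)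
  refine ⟨m', hm'F, ?_, by omega⟩
  by_contra! hm't
  exact hlt.not_ge (below.le_max' m' (Finset.mem_filter.mpr ⟨hm'F, hm't⟩))

theorem exists_sub_eq_sub (hF : IsSyndetic d F) {S : Finset ℤ} (hS : d < S.card) {s : ℤ}
    (hSF : S ⊆ Finset.Ico s (s + synLen F)) :
    ∃ h ∈ S, ∃ h' ∈ S, h ≠ h' ∧ ∃ m ∈ F, ∃ m' ∈ F, m - h = m' - h' := by
  set a := F.min' hF.1
  have hlen : synLen F = F.max' hF.1 - a := dif_pos hF.1
  have hwindow : ∀ h ∈ S, ∃ m ∈ F, m - h ∈ Finset.Ioc (a - s) (a - s + d) := by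
    intro h hh
    have hh := Finset.mem_Ico.mp (hSF hh)
    obtain ⟨m, hmF, hmt, hmd⟩ := hF.exists_mem_Ioc (F.min'_mem hF.1) (F.max'_mem hF.1)
      (t := a + (h - s)) (by omega) (by omega)
    exact ⟨m, hmF, Finset.mem_Ioc.mpr (by omega)⟩
  choose! f hfF hf using hwindow
  have hcard : (Finset.Ioc (a - s) (a - s + d)).card < S.card := by simpa using hS
  obtain ⟨h, hh, h', hh', hne, heq⟩ := Finset.exists_ne_map_eq_of_card_lt_of_maps_to hcard hf
  exact ⟨h, hh, h', hh', hne, f h, hfF h hh, f h', hfF h' hh', heq⟩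

end IsSyndetic

theorem not_disjoint_zpow_image_of_sub_eq_sub {X : Type*} {T : Equiv.Perm X} {A : Set X} {x : X}
    {m m' h h' : ℤ} (hm : (T ^ m) x ∈ A) (hm' : (T ^ m') x ∈ A) (heq : m - h = m' - h') :
    ¬ Disjoint ((T ^ h) '' A) ((T ^ h') '' A) := by
  have hexp : h + m' = h' + m := by omega
  refine Set.not_disjoint_iff.mpr ⟨(T ^ (h + m')) x, ⟨_, hm', ?_⟩, ⟨_, hm, ?_⟩⟩
  · rw [zpow_add, Equiv.Perm.mul_apply]
  · rw [hexp, zpow_add, Equiv.Perm.mul_apply]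

theorem stmt_7_general {X : Type*} (T : Equiv.Perm X) (A : Set X) (d : ℕ)
    (harb : ∀ l : ℕ, ∃ F : Finset ℤ, IsSyndetic d F ∧ (l : ℤ) ≤ synLen F ∧
      ∃ x : X, ∀ n ∈ F, (T ^ n) x ∈ A) :
    ∀ H : Set ℤ, H.Infinite →
      ¬ H.Pairwise fun h h' => Disjoint ((T ^ h) '' A) ((T ^ h') '' A) := by
  intro H hH hdisj
  obtain ⟨S, hSH, hS⟩ := hH.exists_subset_card_eq (d + 1)
  have hSne : S.Nonempty := Finset.card_pos.mp (by omega)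
  obtain ⟨F, hF, hlen, x, hx⟩ := harb (S.max' hSne - S.min' hSne + 1).toNat
  have hSF : S ⊆ Finset.Ico (S.min' hSne) (S.min' hSne + synLen F) := fun h hh =>
    Finset.mem_Ico.mpr ⟨S.min'_le h hh, by have := S.le_max' h hh; omega⟩
  obtain ⟨h, hh, h', hh', hne, m, hm, m', hm', heq⟩ := hF.exists_sub_eq_sub (by omega) hSF
  exact not_disjoint_zpow_image_of_sub_eq_sub (hx m hm) (hx m' hm') heq
    (hdisj (hSH hh) (hSH hh') hne)

/-- If for some `d ≥ 1` the set `A ⊆ X` contains arbitrarily long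
`d`-syndetic sets (for every `l` there is a `d`-syndetic `F ⊆ ℤ` of length `≥ l` with
`⋂_{n ∈ F} T^n(A) ≠ ∅`), then `A` is not weakly wandering: for every infinite `H ⊆ ℤ`
the translates `T^h(A)`, `h ∈ H`, are not pairwise disjoint. -/
theorem stmt_7 {X : Type*} (T : Equiv.Perm X) (A : Set X) (d : ℕ) (hd : 1 ≤ d)
    (harb : ∀ l : ℕ, ∃ F : Finset ℤ, IsSyndetic d F ∧ (l : ℤ) ≤ synLen F ∧
      ∃ x : X, ∀ n ∈ F, (T ^ n) x ∈ A) :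
    ∀ H : Set ℤ, H.Infinite →
      ¬ H.Pairwise fun h h' => Disjoint ((T ^ h) '' A) ((T ^ h') '' A) :=
  stmt_7_general T A d harb
end

section
/- Let T be a homeomorphism of a Polish space X. Suppose that for every nonempty open V ⊆ X there exists d ≥ 1 such that V contains arbitrarily long d-syndetic sets, i.e., ⋂_{n∈F} T^n(V) ≠ ∅ for d-syndetic sets F ⊆ ℤ of arbitrarily large length. Then X admits no non-meager Baire measurable weakly wandering subset. -/
/-!
Write `A =ᵇ U` with `U` open; `U` is nonempty since `A` is not meagre. Take `d` for `U` and
`d + 1` elements `B` of the wandering set `H`. Finitely many translates `T^n A` agree with the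
open sets `T^n U` up to a meagre set, so for a `d`-syndetic `F` at least as long as `B` with
`⋂_{n ∈ F} T^n U ≠ ∅` there is a point `y ∈ ⋂_{n ∈ F} T^n A`. Sliding `B` along `F`, every
`b ∈ B` lies within distance `< d` (from above) of a shifted element of `F`, so by pigeonhole
`b - f = b' - f'` for some `b ≠ b'` in `B` and `f, f' ∈ F`; then `T^(b-f) y ∈ T^b A ∩ T^b' A`.
-/

open Topology Set

lemma synLen_eq {F : Finset ℤ} (h : F.Nonempty) : synLen F = F.max' h - F.min' h :=
  dif_pos h

namespace IsSyndetic

variable {d : ℕ} {F : Finset ℤ}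

-- The witness is the largest element of `F` not exceeding `t`.
lemma exists_mem_Ioc_s8 (hF : IsSyndetic d F) (hd : 1 ≤ d) {t : ℤ}
    (ht : t ∈ Icc (F.min' hF.1) (F.max' hF.1)) :
    ∃ f ∈ F, f ∈ Ioc (t - d) t := by
  obtain ⟨hne, hgap⟩ := hF
  have hbelow : (F.filter (· ≤ t)).Nonempty := ⟨_, Finset.mem_filter.2 ⟨F.min'_mem hne, ht.1⟩⟩
  obtain ⟨hfF, hft⟩ := Finset.mem_filter.1 ((F.filter (· ≤ t)).max'_mem hbelow)
  set f := (F.filter (· ≤ t)).max' hbelow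
  refine ⟨f, hfF, ?_, hft⟩
  by_contra! hfar
  obtain ⟨g, hgF, hfg, hgf⟩ := hgap f hfF _ (F.max'_mem hne) (by have := ht.2; omega)
  have : g ≤ f := (F.filter (· ≤ t)).le_max' g (Finset.mem_filter.2 ⟨hgF, by omega⟩)
  omega

lemma exists_ne_sub_eq_sub (hF : IsSyndetic d F) (hd : 1 ≤ d) {B : Finset ℤ} (hB : d < B.card)
    (hlen : synLen B ≤ synLen F) :
    ∃ b ∈ B, ∃ b' ∈ B, b ≠ b' ∧ ∃ f ∈ F, ∃ f' ∈ F, b - f = b' - f' := by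
  have hBne : B.Nonempty := Finset.card_pos.1 (by omega)
  have hcatch : ∀ b ∈ B, ∃ f ∈ F, f ∈ Ioc (F.min' hF.1 + (b - B.min' hBne) - d)
      (F.min' hF.1 + (b - B.min' hBne)) := by
    intro b hb
    refine hF.exists_mem_Ioc_s8 hd ⟨?_, ?_⟩
    · linarith [B.min'_le b hb]
    · rw [synLen_eq hBne, synLen_eq hF.1] at hlen
      linarith [B.le_max' b hb]
  choose! f hfF hf using hcatch
  obtain ⟨b, hb, b', hb', hbb', hoff⟩ := Finset.exists_ne_map_eq_of_card_lt_of_maps_to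
    (t := Finset.range d) (f := fun b ↦ (F.min' hF.1 + (b - B.min' hBne) - f b).toNat)
    (by simpa using hB) fun b hb ↦ by
      obtain ⟨hlo, hhi⟩ := hf b hb
      simp only [Finset.coe_range, mem_Iio]
      omega
  refine ⟨b, hb, b', hb', hbb', f b, hfF b hb, f b', hfF b' hb', ?_⟩
  obtain ⟨hlo, hhi⟩ := hf b hb
  obtain ⟨hlo', hhi'⟩ := hf b' hb'
  omega

end IsSyndetic

def Homeomorph.toPermHom {X : Type*} [TopologicalSpace X] : (X ≃ₜ X) →* Equiv.Perm X where
  toFun := Homeomorph.toEquiv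
  map_one' := rfl
  map_mul' _ _ := rfl

section Baire

variable {X : Type*} [TopologicalSpace X]

lemma Filter.EventuallyEq.isMeagre_iff {s t : Set X} (h : s =ᵇ t) : IsMeagre s ↔ IsMeagre t := by
  have hmeagre (u : Set X) : IsMeagre u ↔ u =ᵇ (∅ : Set X) := Filter.eventuallyEq_empty.symm
  rw [hmeagre, hmeagre]
  exact ⟨h.symm.trans, h.trans⟩

lemma Homeomorph.image_residualEq_image (e : X ≃ₜ X) {s t : Set X} (h : s =ᵇ t) :
    e '' s =ᵇ e '' t := by
  simp only [e.image_eq_preimage_symm]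
  exact h.filter_mono (tendsto_residual_of_isOpenMap e.symm.continuous e.symm.isOpenMap)

variable [BaireSpace X]

lemma Filter.EventuallyEq.not_isMeagre_iff_nonempty {s U : Set X} (h : s =ᵇ U) (hU : IsOpen U) :
    ¬IsMeagre s ↔ U.Nonempty := by
  rw [h.isMeagre_iff]
  exact ⟨nonempty_of_not_isMeagre, not_isMeagre_of_isOpen hU⟩

lemma BaireMeasurableSet.exists_isOpen_biInter_image_nonempty {A : Set X}
    (hA : BaireMeasurableSet A) (hA' : ¬IsMeagre A) :
    ∃ U, IsOpen U ∧ U.Nonempty ∧ ∀ {ι : Type*} (e : ι → X ≃ₜ X) (s : Finset ι),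
      (⋂ i ∈ s, e i '' U).Nonempty → (⋂ i ∈ s, e i '' A).Nonempty := by
  obtain ⟨U, hU, hAU⟩ := hA.residualEq_isOpen
  refine ⟨U, hU, (hAU.not_isMeagre_iff_nonempty hU).1 hA', fun e s hs ↦ ?_⟩
  have hinter : (⋂ i ∈ s, e i '' A) =ᵇ ⋂ i ∈ s, e i '' U :=
    s.finite_toSet.eventuallyEq_iInter fun i _ ↦ (e i).image_residualEq_image hAU
  exact nonempty_of_not_isMeagre ((hinter.not_isMeagre_iff_nonempty
    (isOpen_biInter_finset fun i _ ↦ (e i).isOpenMap U hU)).2 hs)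

end Baire

lemma not_disjoint_image_zpow_of_sub_eq {X : Type*} {T : Equiv.Perm X} {A : Set X}
    {b b' f f' : ℤ} (h : b - f = b' - f') {y : X} (hy : y ∈ (T ^ f) '' A)
    (hy' : y ∈ (T ^ f') '' A) :
    ¬Disjoint ((T ^ b) '' A) ((T ^ b') '' A) := by
  have hshift : ∀ {c g : ℤ}, y ∈ (T ^ g) '' A → (T ^ c) y ∈ (T ^ (c + g)) '' A := by
    rintro c g ⟨x, hx, rfl⟩
    exact ⟨x, hx, by rw [zpow_add, Equiv.Perm.mul_apply]⟩
  refine not_disjoint_iff.2 ⟨(T ^ (b - f)) y, ?_, ?_⟩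
  · simpa using hshift (c := b - f) hy
  · simpa [h] using hshift (c := b' - f') hy'

/-- Let `T` be a homeomorphism of a Polish space `X` such that every
nonempty open `V ⊆ X` contains arbitrarily long `d`-syndetic sets for some `d ≥ 1`
(i.e. `⋂_{n ∈ F} T^n(V) ≠ ∅` for `d`-syndetic `F ⊆ ℤ` of arbitrarily large length).
Then `X` admits no non-meager Baire measurable weakly wandering subset. -/
theorem stmt_8 {X : Type*} [TopologicalSpace X] [PolishSpace X]
    (T : Equiv.Perm X) (hT : Continuous T) (hT' : Continuous T.symm)
    (hyp : ∀ V : Set X, IsOpen V → V.Nonempty → ∃ d : ℕ, 1 ≤ d ∧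
      ∀ l : ℕ, ∃ F : Finset ℤ, IsSyndetic d F ∧ (l : ℤ) ≤ synLen F ∧
        (⋂ n ∈ F, (T ^ n) '' V).Nonempty) :
    ¬ ∃ A : Set X, BaireMeasurableSet A ∧ ¬ IsMeagre A ∧
      ∃ H : Set ℤ, H.Infinite ∧
        H.Pairwise fun h h' => Disjoint ((T ^ h) '' A) ((T ^ h') '' A) := by
  rintro ⟨A, hA, hA', H, hH, hdisj⟩
  let Th : X ≃ₜ X := ⟨T, hT, hT'⟩
  have hcoe (n : ℤ) : ⇑(Th ^ n) = ⇑(T ^ n) := congrArg (⇑) (map_zpow Homeomorph.toPermHom Th n)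
  obtain ⟨U, hU, hUne, hgen⟩ := hA.exists_isOpen_biInter_image_nonempty hA'
  obtain ⟨d, hd, hsyn⟩ := hyp U hU hUne
  obtain ⟨B, hBH, hB⟩ := hH.exists_subset_card_eq (d + 1)
  obtain ⟨F, hF, hlen, hFU⟩ := hsyn (synLen B).toNat
  obtain ⟨b, hb, b', hb', hbb', f, hf, f', hf', heq⟩ :=
    hF.exists_ne_sub_eq_sub hd (by omega) ((Int.self_le_toNat _).trans hlen)
  obtain ⟨y, hy⟩ := hgen (fun n ↦ Th ^ n) F (by simpa only [hcoe] using hFU)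
  simp only [hcoe, mem_iInter₂] at hy
  exact not_disjoint_image_zpow_of_sub_eq heq (hy f hf) (hy f' hf')
    (hdisj (hBH hb) (hBH hb') hbb')
end

section
/- Let X be a second countable Hausdorff space on which a countable group G acts by homeomorphisms. Let 𝒰 be a countable base for X closed under the G-action and under finite unions and intersections, and let ρ be a G-invariant finitely additive probability measure on the algebra of sets generated by 𝒰. Define the outer measure μ*(A) = inf { Σ_n ρ(U_n) : U_n ∈ 𝒰, A ⊆ ⋃_n U_n }. Then μ* is a G-invariant outer measure, and for every compact K ⊆ X, μ* restricted to subsets of K is a metric outer measure with respect to any compatible metric on K: if E, F ⊆ K are at positive distance apart, then μ*(E ∪ F) = μ*(E) + μ*(F). -/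
/-!
The infimum over covers by `𝒰 ∪ {∅}` is Mathlib's outer measure induced by `ρ` on `𝒰 ∪ {∅}`:
covers using any other set cost `∞` there. A group element carries admissible covers to
admissible covers of the same cost, which gives invariance.

For the metric property, sets `E, F ⊆ K` at positive distance have disjoint closures, which are
compact, so in the Hausdorff space `X` they are separated by disjoint finite unions `A, B` of
basic sets. Intersecting a cover `(Uₙ)` of `E ∪ F` with `A` and with `B` gives covers of `E` and
of `F`, and finite additivity yields `ρ (Uₙ ∩ A) + ρ (Uₙ ∩ B) ≤ ρ Uₙ`.
-/

open scoped ENNReal Pointwise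

/-- The algebra of sets generated by a family `S` of subsets of `X`. -/
inductive SetAlg {X : Type*} (S : Set (Set X)) : Set X → Prop
  | basic : ∀ A ∈ S, SetAlg S A
  | empty : SetAlg S ∅
  | compl : ∀ A, SetAlg S A → SetAlg S Aᶜ
  | union : ∀ A B, SetAlg S A → SetAlg S B → SetAlg S (A ∪ B)

/-- The outer measure `μ*(A) = inf { Σₙ ρ(Uₙ) : Uₙ ∈ 𝒰, A ⊆ ⋃ₙ Uₙ }` determined by a
set function `ρ` on a family `𝒰` of sets (covers are allowed to be padded by `∅`). -/
noncomputable def muStar {X : Type*} (𝒰 : Set (Set X)) (ρ : Set X → ℝ≥0∞)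
    (A : Set X) : ℝ≥0∞ :=
  ⨅ (U : ℕ → Set X) (_ : ∀ n, U n ∈ 𝒰 ∪ {∅}) (_ : A ⊆ ⋃ n, U n), ∑' n, ρ (U n)

open MeasureTheory Set

namespace SetAlg

variable {X : Type*} {𝒰 : Set (Set X)} {A B : Set X}

theorem univ : SetAlg 𝒰 (Set.univ : Set X) := by
  simpa using compl _ (empty (S := 𝒰))

theorem inter (hA : SetAlg 𝒰 A) (hB : SetAlg 𝒰 B) : SetAlg 𝒰 (A ∩ B) := by
  simpa [compl_union] using compl _ (union _ _ (compl _ hA) (compl _ hB))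

theorem diff (hA : SetAlg 𝒰 A) (hB : SetAlg 𝒰 B) : SetAlg 𝒰 (A \ B) :=
  hA.inter (compl _ hB)

theorem of_mem_union_singleton (hA : A ∈ 𝒰 ∪ {∅}) : SetAlg 𝒰 A :=
  hA.elim (basic A) fun h => (eq_of_mem_singleton h) ▸ empty

end SetAlg

section UnionSingleton

variable {X : Type*} {𝒰 : Set (Set X)} {U V : Set X}

theorem union_mem_union_singleton (h𝒰u : ∀ U ∈ 𝒰, ∀ V ∈ 𝒰, U ∪ V ∈ 𝒰)
    (hU : U ∈ 𝒰 ∪ {∅}) (hV : V ∈ 𝒰 ∪ {∅}) : U ∪ V ∈ 𝒰 ∪ {∅} := by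
  rcases hU with hU | rfl
  · rcases hV with hV | rfl
    · exact Or.inl (h𝒰u U hU V hV)
    · simpa using Or.inr hU
  · simpa using hV

theorem inter_mem_union_singleton (h𝒰i : ∀ U ∈ 𝒰, ∀ V ∈ 𝒰, U ∩ V ∈ 𝒰)
    (hU : U ∈ 𝒰 ∪ {∅}) (hV : V ∈ 𝒰 ∪ {∅}) : U ∩ V ∈ 𝒰 ∪ {∅} := by
  rcases hU with hU | rfl
  · rcases hV with hV | rfl
    · exact Or.inl (h𝒰i U hU V hV)
    · simp
  · simp

end UnionSingleton

def FinitelyAdditiveOn {X : Type*} (𝒰 : Set (Set X)) (ρ : Set X → ℝ≥0∞) : Prop :=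
  ∀ A B : Set X, SetAlg 𝒰 A → SetAlg 𝒰 B → Disjoint A B → ρ (A ∪ B) = ρ A + ρ B

namespace FinitelyAdditiveOn

variable {X : Type*} {𝒰 : Set (Set X)} {ρ : Set X → ℝ≥0∞}

theorem apply_empty (hρ : FinitelyAdditiveOn 𝒰 ρ) (h1 : ρ Set.univ ≠ ∞) : ρ ∅ = 0 := by
  have h := hρ Set.univ ∅ SetAlg.univ SetAlg.empty (disjoint_empty _)
  rw [union_empty] at h
  exact (ENNReal.add_right_inj h1).1 (by rw [add_zero]; exact h.symm)

theorem mono (hρ : FinitelyAdditiveOn 𝒰 ρ) {A B : Set X} (hA : SetAlg 𝒰 A)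
    (hB : SetAlg 𝒰 B) (hAB : A ⊆ B) : ρ A ≤ ρ B := by
  rw [← union_sdiff_cancel hAB, hρ A (B \ A) hA (hB.diff hA) disjoint_sdiff_right]
  exact le_self_add

theorem add_inter_le (hρ : FinitelyAdditiveOn 𝒰 ρ) {U A B : Set X} (hU : SetAlg 𝒰 U)
    (hA : SetAlg 𝒰 A) (hB : SetAlg 𝒰 B) (hAB : Disjoint A B) :
    ρ (U ∩ A) + ρ (U ∩ B) ≤ ρ U := by
  rw [← hρ _ _ (hU.inter hA) (hU.inter hB) (hAB.mono inter_subset_right inter_subset_right)]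
  exact hρ.mono ((hU.inter hA).union _ _ (hU.inter hB)) hU
    (union_subset inter_subset_left inter_subset_left)

end FinitelyAdditiveOn

section MuStar

variable {X : Type*} {𝒰 : Set (Set X)} {ρ : Set X → ℝ≥0∞}

theorem muStar_le_tsum {U : ℕ → Set X} (hU : ∀ n, U n ∈ 𝒰 ∪ {∅}) {A : Set X}
    (hA : A ⊆ ⋃ n, U n) : muStar 𝒰 ρ A ≤ ∑' n, ρ (U n) :=
  iInf₂_le_of_le U hU (iInf_le _ hA)

theorem le_muStar {A : Set X} {c : ℝ≥0∞}
    (h : ∀ U : ℕ → Set X, (∀ n, U n ∈ 𝒰 ∪ {∅}) → A ⊆ ⋃ n, U n → c ≤ ∑' n, ρ (U n)) :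
    c ≤ muStar 𝒰 ρ A :=
  le_iInf₂ fun U hU => le_iInf (h U hU)

theorem muStar_eq_inducedOuterMeasure (hρ0 : ρ ∅ = 0) :
    muStar 𝒰 ρ = inducedOuterMeasure (fun s (_ : s ∈ 𝒰 ∪ {∅}) => ρ s) (Or.inr rfl) hρ0 := by
  ext A
  simp only [inducedOuterMeasure, OuterMeasure.ofFunction_apply]
  apply le_antisymm
  · refine le_iInf₂ fun U hA => ?_
    by_cases hU : ∀ n, U n ∈ 𝒰 ∪ {∅}
    · simpa only [extend_eq _ (hU _)] using muStar_le_tsum hU hA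
    · obtain ⟨n, hn⟩ := not_forall.1 hU
      rw [ENNReal.tsum_eq_top_of_eq_top ⟨n, extend_eq_top (fun s (_ : s ∈ 𝒰 ∪ {∅}) => ρ s) hn⟩]
      exact le_top
  · exact le_muStar fun U hU hA =>
      iInf₂_le_of_le U hA (tsum_congr fun n => extend_eq _ (hU n)).le

theorem muStar_smul_le {G : Type*} [SMul G X] (h𝒰G : ∀ (g : G), ∀ U ∈ 𝒰, g • U ∈ 𝒰)
    (hρG : ∀ (g : G), ∀ U ∈ 𝒰, ρ (g • U) = ρ U) (g : G) (A : Set X) :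
    muStar 𝒰 ρ (g • A) ≤ muStar 𝒰 ρ A := by
  refine le_muStar fun U hU hAU => ?_
  have hgU : ∀ n, g • U n ∈ 𝒰 ∪ {∅} := fun n => by
    rcases hU n with h | h
    · exact Or.inl (h𝒰G g _ h)
    · simp [eq_of_mem_singleton h]
  have hρgU : ∀ n, ρ (g • U n) = ρ (U n) := fun n => by
    rcases hU n with h | h
    · exact hρG g _ h
    · simp [eq_of_mem_singleton h]
  calc muStar 𝒰 ρ (g • A) ≤ ∑' n, ρ (g • U n) :=
        muStar_le_tsum hgU (smul_set_iUnion g U ▸ smul_set_mono hAU)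
    _ = ∑' n, ρ (U n) := tsum_congr hρgU

theorem muStar_smul {G : Type*} [Group G] [MulAction G X]
    (h𝒰G : ∀ (g : G), ∀ U ∈ 𝒰, g • U ∈ 𝒰) (hρG : ∀ (g : G), ∀ U ∈ 𝒰, ρ (g • U) = ρ U)
    (g : G) (A : Set X) : muStar 𝒰 ρ (g • A) = muStar 𝒰 ρ A := by
  refine le_antisymm (muStar_smul_le h𝒰G hρG g A) ?_
  simpa using muStar_smul_le h𝒰G hρG g⁻¹ (g • A)

theorem add_le_muStar_union (h𝒰i : ∀ U ∈ 𝒰, ∀ V ∈ 𝒰, U ∩ V ∈ 𝒰)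
    (hρ : FinitelyAdditiveOn 𝒰 ρ) {A B : Set X} (hA : A ∈ 𝒰 ∪ {∅}) (hB : B ∈ 𝒰 ∪ {∅})
    (hAB : Disjoint A B) {E F : Set X} (hEA : E ⊆ A) (hFB : F ⊆ B) :
    muStar 𝒰 ρ E + muStar 𝒰 ρ F ≤ muStar 𝒰 ρ (E ∪ F) := by
  refine le_muStar fun U hU hEFU => ?_
  have hE : E ⊆ ⋃ n, U n ∩ A := by
    rw [← iUnion_inter]; exact subset_inter (subset_union_left.trans hEFU) hEA
  have hF : F ⊆ ⋃ n, U n ∩ B := by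
    rw [← iUnion_inter]; exact subset_inter (subset_union_right.trans hEFU) hFB
  calc muStar 𝒰 ρ E + muStar 𝒰 ρ F
      ≤ (∑' n, ρ (U n ∩ A)) + ∑' n, ρ (U n ∩ B) :=
        add_le_add (muStar_le_tsum (fun n => inter_mem_union_singleton h𝒰i (hU n) hA) hE)
          (muStar_le_tsum (fun n => inter_mem_union_singleton h𝒰i (hU n) hB) hF)
    _ = ∑' n, (ρ (U n ∩ A) + ρ (U n ∩ B)) := ENNReal.tsum_add.symm
    _ ≤ ∑' n, ρ (U n) := ENNReal.tsum_le_tsum fun n =>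
        hρ.add_inter_le (.of_mem_union_singleton (hU n)) (.of_mem_union_singleton hA)
          (.of_mem_union_singleton hB) hAB

end MuStar

section Topology

variable {X : Type*} [TopologicalSpace X] {𝒰 : Set (Set X)}

theorem TopologicalSpace.IsTopologicalBasis.exists_mem_union_singleton_between
    (h𝒰b : IsTopologicalBasis 𝒰) (h𝒰u : ∀ U ∈ 𝒰, ∀ V ∈ 𝒰, U ∪ V ∈ 𝒰) {C O : Set X}
    (hC : IsCompact C) (hO : IsOpen O) (hCO : C ⊆ O) : ∃ A ∈ 𝒰 ∪ {∅}, C ⊆ A ∧ A ⊆ O := by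
  refine hC.induction_on (p := fun C => ∃ A ∈ 𝒰 ∪ {∅}, C ⊆ A ∧ A ⊆ O)
    ⟨∅, Or.inr rfl, subset_rfl, empty_subset O⟩ ?_ ?_ ?_
  · rintro s t hst ⟨A, hA, htA, hAO⟩
    exact ⟨A, hA, hst.trans htA, hAO⟩
  · rintro s t ⟨A, hA, hsA, hAO⟩ ⟨B, hB, htB, hBO⟩
    exact ⟨A ∪ B, union_mem_union_singleton h𝒰u hA hB, union_subset_union hsA htB,
      union_subset hAO hBO⟩
  · intro x hx
    obtain ⟨W, hW, hxW, hWO⟩ := h𝒰b.exists_subset_of_mem_open (hCO hx) hO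
    exact ⟨W, mem_nhdsWithin_of_mem_nhds ((h𝒰b.isOpen hW).mem_nhds hxW),
      W, Or.inl hW, subset_rfl, hWO⟩

theorem TopologicalSpace.IsTopologicalBasis.exists_disjoint_mem_union_singleton [T2Space X]
    (h𝒰b : IsTopologicalBasis 𝒰) (h𝒰u : ∀ U ∈ 𝒰, ∀ V ∈ 𝒰, U ∪ V ∈ 𝒰) {C D : Set X}
    (hC : IsCompact C) (hD : IsCompact D) (hCD : Disjoint C D) :
    ∃ A ∈ 𝒰 ∪ {∅}, ∃ B ∈ 𝒰 ∪ {∅}, C ⊆ A ∧ D ⊆ B ∧ Disjoint A B := by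
  obtain ⟨O, O', hO, hO', hCO, hDO', hOO'⟩ := SeparatedNhds.of_isCompact_isCompact hC hD hCD
  obtain ⟨A, hA, hCA, hAO⟩ := h𝒰b.exists_mem_union_singleton_between h𝒰u hC hO hCO
  obtain ⟨B, hB, hDB, hBO'⟩ := h𝒰b.exists_mem_union_singleton_between h𝒰u hD hO' hDO'
  exact ⟨A, hA, B, hB, hCA, hDB, hOO'.mono hAO hBO'⟩

theorem disjoint_closure_of_le_dist {Y : Type*} [t : TopologicalSpace Y] (m : MetricSpace Y)
    (hm : m.toUniformSpace.toTopologicalSpace = t) {s u : Set Y} {ε : ℝ} (hε : 0 < ε)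
    (h : ∀ x ∈ s, ∀ y ∈ u, ε ≤ m.dist x y) : Disjoint (closure s) (closure u) := by
  subst hm
  have hs : closure s ⊆ {x | ENNReal.ofReal ε ≤ Metric.infEDist x u} :=
    closure_minimal (fun x hx => Metric.le_infEDist.2 fun y hy => by
        rw [edist_dist]; exact ENNReal.ofReal_le_ofReal (h x hx y hy))
      (isClosed_le continuous_const Metric.continuous_infEDist)
  refine disjoint_left.2 fun x hxs hxu => hε.not_ge (ENNReal.ofReal_eq_zero.1 ?_)
  exact nonpos_iff_eq_zero.1 (Metric.mem_closure_iff_infEDist_zero.1 hxu ▸ hs hxs)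

theorem IsClosed.disjoint_closure_of_le_dist {K : Set X} (hK : IsClosed K) (m : MetricSpace K)
    (hm : m.toUniformSpace.toTopologicalSpace = (inferInstance : TopologicalSpace K))
    {E F : Set X} (hE : E ⊆ K) (hF : F ⊆ K) {ε : ℝ} (hε : 0 < ε)
    (h : ∀ x y : K, (x : X) ∈ E → (y : X) ∈ F → ε ≤ m.dist x y) :
    Disjoint (closure E) (closure F) := by
  have hcl : ∀ S ⊆ K, closure S = (↑) '' closure ((↑) ⁻¹' S : Set K) := fun S hS => by
    rw [← hK.isClosedEmbedding_subtypeVal.closure_image_eq, Subtype.image_preimage_coe,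
      inter_eq_right.2 hS]
  rw [hcl E hE, hcl F hF, disjoint_image_iff Subtype.val_injective]
  exact _root_.disjoint_closure_of_le_dist m hm hε fun x hx y hy => h x y hx hy

end Topology

theorem stmt_11_general {G X : Type*} [Group G] [TopologicalSpace X] [T2Space X]
    [SecondCountableTopology X] [MulAction G X]
    (𝒰 : Set (Set X))
    (h𝒰b : TopologicalSpace.IsTopologicalBasis 𝒰)
    (h𝒰G : ∀ (g : G), ∀ U ∈ 𝒰, g • U ∈ 𝒰)
    (h𝒰u : ∀ U ∈ 𝒰, ∀ V ∈ 𝒰, U ∪ V ∈ 𝒰)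
    (h𝒰i : ∀ U ∈ 𝒰, ∀ V ∈ 𝒰, U ∩ V ∈ 𝒰)
    (ρ : Set X → ℝ≥0∞) (hρ1 : ρ Set.univ = 1)
    (hρadd : ∀ A B : Set X, SetAlg 𝒰 A → SetAlg 𝒰 B → Disjoint A B →
      ρ (A ∪ B) = ρ A + ρ B)
    (hρinv : ∀ (g : G) (A : Set X), SetAlg 𝒰 A → ρ (g • A) = ρ A) :
    muStar 𝒰 ρ ∅ = 0 ∧
    (∀ A B : Set X, A ⊆ B → muStar 𝒰 ρ A ≤ muStar 𝒰 ρ B) ∧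
    (∀ s : ℕ → Set X, muStar 𝒰 ρ (⋃ n, s n) ≤ ∑' n, muStar 𝒰 ρ (s n)) ∧
    (∀ (g : G) (A : Set X), muStar 𝒰 ρ (g • A) = muStar 𝒰 ρ A) ∧
    (∀ K : Set X, IsCompact K →
      (∃ m : MetricSpace K,
        m.toUniformSpace.toTopologicalSpace = (inferInstance : TopologicalSpace K)) ∧
      ∀ m : MetricSpace K,
        m.toUniformSpace.toTopologicalSpace = (inferInstance : TopologicalSpace K) →
        ∀ E F : Set X, E ⊆ K → F ⊆ K →
          (∃ ε : ℝ, 0 < ε ∧ ∀ x y : K, (x : X) ∈ E → (y : X) ∈ F →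
            ε ≤ m.dist x y) →
          muStar 𝒰 ρ (E ∪ F) = muStar 𝒰 ρ E + muStar 𝒰 ρ F) := by
  have hρ0 : ρ ∅ = 0 := FinitelyAdditiveOn.apply_empty hρadd (by simp [hρ1])
  have hμ := muStar_eq_inducedOuterMeasure (𝒰 := 𝒰) hρ0
  refine ⟨hμ ▸ measure_empty, fun A B hAB => hμ ▸ measure_mono hAB,
    fun s => hμ ▸ measure_iUnion_le s,
    muStar_smul h𝒰G fun g U hU => hρinv g U (.basic U hU), fun K hK => ?_⟩
  have : CompactSpace K := isCompact_iff_compactSpace.mp hK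
  refine ⟨⟨TopologicalSpace.metrizableSpaceMetric K, rfl⟩,
    fun m hm E F hE hF ⟨ε, hε, hEF⟩ => le_antisymm (hμ ▸ measure_union_le E F) ?_⟩
  have hcl := hK.isClosed.disjoint_closure_of_le_dist m hm hE hF hε hEF
  have hcpt : ∀ S ⊆ K, IsCompact (closure S) := fun S hS =>
    hK.of_isClosed_subset isClosed_closure (closure_minimal hS hK.isClosed)
  obtain ⟨A, hA, B, hB, hEA, hFB, hAB⟩ :=
    h𝒰b.exists_disjoint_mem_union_singleton h𝒰u (hcpt E hE) (hcpt F hF) hcl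
  exact add_le_muStar_union h𝒰i hρadd hA hB hAB (subset_closure.trans hEA)
    (subset_closure.trans hFB)

/-- Let a countable group `G` act by homeomorphisms on a second
countable Hausdorff space `X`, let `𝒰` be a countable base closed under the `G`-action
and under finite unions and intersections, and let `ρ` be a `G`-invariant finitely
additive probability measure on the algebra generated by `𝒰`. Then the outer measure
`μ* = muStar 𝒰 ρ` is a `G`-invariant outer measure, every compact `K ⊆ X` is
metrizable, and `μ*` is a metric outer measure on `K` with respect to any compatible
metric: if `E, F ⊆ K` are at positive distance apart, then
`μ*(E ∪ F) = μ*(E) + μ*(F)`. -/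
theorem stmt_11 {G X : Type*} [Group G] [Countable G] [TopologicalSpace X] [T2Space X]
    [SecondCountableTopology X] [MulAction G X]
    (hcont : ∀ g : G, Continuous fun x : X => g • x)
    (𝒰 : Set (Set X)) (h𝒰c : 𝒰.Countable)
    (h𝒰b : TopologicalSpace.IsTopologicalBasis 𝒰)
    (h𝒰G : ∀ (g : G), ∀ U ∈ 𝒰, g • U ∈ 𝒰)
    (h𝒰u : ∀ U ∈ 𝒰, ∀ V ∈ 𝒰, U ∪ V ∈ 𝒰)
    (h𝒰i : ∀ U ∈ 𝒰, ∀ V ∈ 𝒰, U ∩ V ∈ 𝒰)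
    (ρ : Set X → ℝ≥0∞) (hρ1 : ρ Set.univ = 1)
    (hρadd : ∀ A B : Set X, SetAlg 𝒰 A → SetAlg 𝒰 B → Disjoint A B →
      ρ (A ∪ B) = ρ A + ρ B)
    (hρinv : ∀ (g : G) (A : Set X), SetAlg 𝒰 A → ρ (g • A) = ρ A) :
    muStar 𝒰 ρ ∅ = 0 ∧
    (∀ A B : Set X, A ⊆ B → muStar 𝒰 ρ A ≤ muStar 𝒰 ρ B) ∧
    (∀ s : ℕ → Set X, muStar 𝒰 ρ (⋃ n, s n) ≤ ∑' n, muStar 𝒰 ρ (s n)) ∧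
    (∀ (g : G) (A : Set X), muStar 𝒰 ρ (g • A) = muStar 𝒰 ρ A) ∧
    (∀ K : Set X, IsCompact K →
      (∃ m : MetricSpace K,
        m.toUniformSpace.toTopologicalSpace = (inferInstance : TopologicalSpace K)) ∧
      ∀ m : MetricSpace K,
        m.toUniformSpace.toTopologicalSpace = (inferInstance : TopologicalSpace K) →
        ∀ E F : Set X, E ⊆ K → F ⊆ K →
          (∃ ε : ℝ, 0 < ε ∧ ∀ x y : K, (x : X) ∈ E → (y : X) ∈ F →
            ε ≤ m.dist x y) →
          muStar 𝒰 ρ (E ∪ F) = muStar 𝒰 ρ E + muStar 𝒰 ρ F) :=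
  stmt_11_general 𝒰 h𝒰b h𝒰G h𝒰u h𝒰i ρ hρ1 hρadd hρinv
end

section
/- Let G be a countable group acting on a standard Borel space X by Borel automorphisms, and suppose there exists a Borel partition {A_n}_{n∈ℕ} of X into countably many pieces each of which meets every orbit (a complete section), together with a countable base-like family {U_n}_{n∈ℕ} generating the Borel σ-algebra of X. Suppose T ⊆ X is a Borel partial transversal (|T ∩ [x]_G| ≤ 1 for every x) and the action on [T]_G is aperiodic (every orbit meeting T is infinite). Then there exist pairwise disjoint Borel sets {T_n}_{n∈ℕ} with T_0 = T such that for each n there is a Borel function γ_n : T → G with x ↦ γ_n(x) • x a bijection from T onto T_n (so T is a Borel traveling set). -/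
/-!
Enumerate `G` as `g 0 = 1, g 1, g 2, …`. For `x ∈ T` call `k` new if `g k • x` differs from all
`g j • x` with `j < k`; since the orbit of `x` is infinite there are infinitely many new indices,
and `γₙ(x) := g (kₙ)` for the `n`-th new index `kₙ` moves `x` to pairwise distinct points of its
orbit, with `γ₀ = 1`. Being new is a Borel condition, so each `γₙ` is Borel. As `T` meets every
orbit at most once, each `x ↦ γₙ(x) • x` is injective on `T` and the images `Tₙ` are pairwise
disjoint.
-/

theorem exists_surjective_nat_apply_zero_eq {α : Type*} [Countable α] (a : α) :
    ∃ f : ℕ → α, Function.Surjective f ∧ f 0 = a := by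
  have : Nonempty α := ⟨a⟩
  obtain ⟨e, he⟩ := exists_surjective_nat α
  refine ⟨fun n => Nat.casesOn n a e, fun b => ?_, rfl⟩
  obtain ⟨k, rfl⟩ := he b
  exact ⟨k + 1, rfl⟩

section Count

variable {X : Type*} [MeasurableSpace X] {p : X → ℕ → Prop}

theorem measurable_count_of_measurableSet [∀ x, DecidablePred (p x)]
    (hp : ∀ k, MeasurableSet {x | p x k}) (k : ℕ) :
    Measurable fun x => Nat.count (p x) k := by
  induction k with
  | zero => simpa only [Nat.count_zero] using measurable_const
  | succ k ih =>
    simp_rw [Nat.count_succ]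
    exact ih.add (Measurable.ite (hp k) measurable_const measurable_const)

theorem measurableSet_nth_eq_of_infinite (hp : ∀ k, MeasurableSet {x | p x k})
    {S : Set X} (hS : MeasurableSet S) (hinf : ∀ x ∈ S, (Set.ofPred (p x)).Infinite) (n k : ℕ) :
    MeasurableSet {x ∈ S | Nat.nth (p x) n = k} := by
  classical
  have hrepr : {x ∈ S | Nat.nth (p x) n = k} = S ∩ {x | p x k} ∩ {x | Nat.count (p x) k = n} := by
    ext x
    simp only [Set.mem_ofPred_eq, Set.mem_inter_iff]
    constructor
    · rintro ⟨hx, rfl⟩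
      exact ⟨⟨hx, Nat.nth_mem_of_infinite (hinf x hx) n⟩,
        Nat.count_nth_of_infinite (hinf x hx) n⟩
    · rintro ⟨⟨hx, hk⟩, rfl⟩
      exact ⟨hx, Nat.nth_count hk⟩
  rw [hrepr]
  exact (hS.inter (hp k)).inter (measurable_count_of_measurableSet hp k (measurableSet_singleton n))

end Count

section Travel

variable {G X : Type*} [Group G] [MulAction G X] (g : ℕ → G)

def IsNewIndex (x : X) (k : ℕ) : Prop := ∀ j < k, g j • x ≠ g k • x

noncomputable def travel (n : ℕ) (x : X) : G := g (Nat.nth (IsNewIndex g x) n)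

variable {g}

theorem infinite_setOf_isNewIndex (hg : Function.Surjective g) {x : X}
    (hx : (MulAction.orbit G x).Infinite) : (Set.ofPred (IsNewIndex g x)).Infinite := by
  classical
  refine fun hfin => hx ((hfin.image fun k => g k • x).subset ?_)
  rintro _ ⟨h, rfl⟩
  have hex : ∃ j, g j • x = h • x := by
    obtain ⟨k, rfl⟩ := hg h
    exact ⟨k, rfl⟩
  refine ⟨Nat.find hex, fun j hj hje => Nat.find_min hex hj (hje.trans (Nat.find_spec hex)),
    Nat.find_spec hex⟩

theorem travel_zero (hg0 : g 0 = 1) (x : X) : travel g 0 x = 1 := by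
  have hnew : IsNewIndex g x 0 := fun j hj => absurd hj j.not_lt_zero
  rw [travel, Nat.nth_zero_of_zero hnew, hg0]

theorem travel_smul_injective {x : X} (hinf : (Set.ofPred (IsNewIndex g x)).Infinite) :
    Function.Injective fun n => travel g n x • x := by
  intro m n hmn
  by_contra hne
  rcases lt_or_gt_of_ne hne with hlt | hlt
  · exact Nat.nth_mem_of_infinite hinf n _ (Nat.nth_strictMono hinf hlt) hmn
  · exact Nat.nth_mem_of_infinite hinf m _ (Nat.nth_strictMono hinf hlt) hmn.symm

variable [MeasurableSpace X] [MeasurableEq X] (hact : ∀ a : G, Measurable fun x : X => a • x)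
include hact

theorem measurableSet_isNewIndex (k : ℕ) : MeasurableSet {x : X | IsNewIndex g x k} := by
  have hrepr : {x : X | IsNewIndex g x k} = ⋂ j ∈ Set.Iio k, {x | g j • x = g k • x}ᶜ := by
    ext x
    simp [IsNewIndex]
  rw [hrepr]
  exact .biInter (Set.to_countable _) fun j _ => (measurableSet_eq_fun (hact _) (hact _)).compl

theorem measurableSet_travel_eq {T : Set X} (hT : MeasurableSet T)
    (hinf : ∀ x ∈ T, (Set.ofPred (IsNewIndex g x)).Infinite) (n : ℕ) (a : G) :
    MeasurableSet {x ∈ T | travel g n x = a} := by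
  have hrepr : {x ∈ T | travel g n x = a}
      = ⋃ k ∈ g ⁻¹' {a}, {x ∈ T | Nat.nth (IsNewIndex g x) n = k} := by
    ext x
    simp [travel, and_comm]
  rw [hrepr]
  exact .biUnion (Set.to_countable _) fun k _ =>
    measurableSet_nth_eq_of_infinite (measurableSet_isNewIndex hact) hT hinf n k

end Travel

section Transversal

variable {G X : Type*} [Group G] [MulAction G X] {T : Set X}

theorem eq_of_smul_eq_smul_of_partialTransversal
    (hT : ∀ x ∈ T, ∀ y ∈ T, (∃ g : G, g • x = y) → x = y) {x y : X} (hx : x ∈ T) (hy : y ∈ T)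
    {a b : G} (h : a • x = b • y) : x = y :=
  hT x hx y hy ⟨b⁻¹ * a, by rw [mul_smul, h, inv_smul_smul]⟩

theorem measurableSet_image_smul [Countable G] [MeasurableSpace X]
    (hact : ∀ a : G, Measurable fun x : X => a • x) {γ : X → G}
    (hγ : ∀ a, MeasurableSet {x ∈ T | γ x = a}) : MeasurableSet ((fun x => γ x • x) '' T) := by
  have hrepr : (fun x => γ x • x) '' T = ⋃ a : G, (fun x => a⁻¹ • x) ⁻¹' {x ∈ T | γ x = a} := by
    ext y
    simp only [Set.mem_image, Set.mem_iUnion, Set.mem_preimage, Set.mem_ofPred_eq]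
    constructor
    · rintro ⟨x, hx, rfl⟩
      exact ⟨γ x, by rw [inv_smul_smul]; exact ⟨hx, rfl⟩⟩
    · rintro ⟨a, hx, hγx⟩
      exact ⟨a⁻¹ • y, hx, by rw [hγx, smul_inv_smul]⟩
  rw [hrepr]
  exact .iUnion fun a => hact a⁻¹ (hγ a)

end Transversal

theorem stmt_14_general {G X : Type*} [Group G] [Countable G]
    [MeasurableSpace X] [StandardBorelSpace X] [MulAction G X]
    (hact : ∀ g : G, Measurable fun x : X => g • x)
    (T : Set X) (hTm : MeasurableSet T)
    (hTpt : ∀ x ∈ T, ∀ y ∈ T, (∃ g : G, g • x = y) → x = y)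
    (hap : ∀ x ∈ T, (MulAction.orbit G x).Infinite) :
    ∃ Tn : ℕ → Set X, (∀ n, MeasurableSet (Tn n)) ∧
      Pairwise (Function.onFun Disjoint Tn) ∧ Tn 0 = T ∧
      ∀ n, ∃ γ : X → G, (∀ g : G, MeasurableSet {x ∈ T | γ x = g}) ∧
        Set.BijOn (fun x => γ x • x) T (Tn n) := by
  obtain ⟨g, hg, hg0⟩ := exists_surjective_nat_apply_zero_eq (1 : G)
  have hinf x (hx : x ∈ T) := infinite_setOf_isNewIndex hg (hap x hx)
  have hfib := measurableSet_travel_eq hact hTm hinf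
  refine ⟨fun n => (fun x => travel g n x • x) '' T,
    fun n => measurableSet_image_smul hact (hfib n), ?_, ?_,
    fun n => ⟨travel g n, hfib n, Set.InjOn.bijOn_image fun x hx y hy hxy =>
      eq_of_smul_eq_smul_of_partialTransversal hTpt hx hy hxy⟩⟩
  · refine fun m n hmn => Set.disjoint_left.mpr ?_
    rintro y ⟨x, hx, rfl⟩ ⟨x', hx', hxx'⟩
    obtain rfl := eq_of_smul_eq_smul_of_partialTransversal hTpt hx' hx hxx'
    exact hmn (travel_smul_injective (hinf x' hx') hxx').symm
  · simp only [travel_zero hg0, one_smul, Set.image_id']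

/-- Let `G` be a countable group acting on a standard Borel space `X`,
given a Borel partition `{A n}` of `X` into complete sections and a countable family
`{U n}` generating the Borel σ-algebra of `X`. If `T ⊆ X` is a Borel partial
transversal and the action is aperiodic on `[T]_G` (every orbit meeting `T` is
infinite), then `T` is a Borel traveling set: there are pairwise disjoint Borel sets
`{T n}` with `T 0 = T` and, for each `n`, a Borel map `γ : T → G` such that
`x ↦ γ(x) • x` is a bijection from `T` onto `T n`. -/
theorem stmt_14 {G X : Type*} [Group G] [Countable G]
    [MeasurableSpace X] [StandardBorelSpace X] [MulAction G X]
    (hact : ∀ g : G, Measurable fun x : X => g • x)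
    (A : ℕ → Set X) (hAm : ∀ n, MeasurableSet (A n))
    (hAd : Pairwise (Function.onFun Disjoint A)) (hAU : (⋃ n, A n) = Set.univ)
    (hAcs : ∀ (n : ℕ) (x : X), ∃ g : G, g • x ∈ A n)
    (U : ℕ → Set X)
    (hUgen : MeasurableSpace.generateFrom (Set.range U) =
      (inferInstance : MeasurableSpace X))
    (T : Set X) (hTm : MeasurableSet T)
    (hTpt : ∀ x ∈ T, ∀ y ∈ T, (∃ g : G, g • x = y) → x = y)
    (hap : ∀ x ∈ T, (MulAction.orbit G x).Infinite) :
    ∃ Tn : ℕ → Set X, (∀ n, MeasurableSet (Tn n)) ∧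
      Pairwise (Function.onFun Disjoint Tn) ∧ Tn 0 = T ∧
      ∀ n, ∃ γ : X → G, (∀ g : G, MeasurableSet {x ∈ T | γ x = g}) ∧
        Set.BijOn (fun x => γ x • x) T (Tn n) :=
  stmt_14_general hact T hTm hTpt hap
end

section
/- Let G be a countable group acting freely and smoothly by Borel automorphisms on a standard Borel space X with all orbits infinite. Then X admits a Borel 2-generator: there is a Borel set A ⊆ X such that the family {g • A : g ∈ G} ∪ {g • (X \ A) : g ∈ G} separates points of X (equivalently, the symbolic representation map X → 2^G with respect to the partition {A, X \ A} is injective). -/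
/-!
By freeness and smoothness each `x` is `(c x)⁻¹ • t` for a unique `c x ∈ G` and `t` in the
transversal `T`, so `X ≅ T × G`. Fix a Borel injection `β : X → 2^ℕ` and put `x` into `A` iff
`(c x)⁻¹ ∈ Φ (β (c x • x))`, where `Φ s = sidonCode s ⊆ G` codes `s` along the injective
sequence `a = sidonSeq G`, in which each `a n` avoids all `a i * (a j)⁻¹ * a l` with
`i, j, l < n`: `a (2n) ∈ Φ s` always, and `a (2n+1) ∈ Φ s ↔ s n`. Then `{g | g • x ∈ A}` is the
right translate `Φ (β (c x • x)) * c x`. For `k ≠ 1` the avoidance property allows only finitely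
many `n` with `a n * k` in the range of `a`, so the infinitely many markers `a (2n)` force
distinct pairs `(s, h)` to give distinct translates `Φ s * h`.
-/

open Set Function MeasureTheory

noncomputable def greedySeq {α : Type*} [Infinite α] (S : (n : ℕ) → (Fin n → α) → Finset α) :
    ℕ → α
  | n => (Infinite.exists_notMem_finset (S n fun i => greedySeq S i)).choose

theorem greedySeq_notMem {α : Type*} [Infinite α] (S : (n : ℕ) → (Fin n → α) → Finset α)
    (n : ℕ) : greedySeq S n ∉ S n fun i => greedySeq S i := by
  rw [greedySeq]
  exact (Infinite.exists_notMem_finset _).choose_spec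

section Sidon

variable (G : Type*) [Group G] [Infinite G]

open scoped Classical in
noncomputable def sidonSeq : ℕ → G :=
  greedySeq fun n f =>
    Finset.univ.image fun p : Fin n × Fin n × Fin n => f p.1 * (f p.2.1)⁻¹ * f p.2.2

variable {G}

theorem sidonSeq_ne_mul_inv_mul {i j l n : ℕ} (hi : i < n) (hj : j < n) (hl : l < n) :
    sidonSeq G n ≠ sidonSeq G i * (sidonSeq G j)⁻¹ * sidonSeq G l := by
  classical
  intro h
  exact (greedySeq_notMem _ n : sidonSeq G n ∉ _)
    (Finset.mem_image.2 ⟨(⟨i, hi⟩, ⟨j, hj⟩, ⟨l, hl⟩), Finset.mem_univ _, h.symm⟩)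

theorem sidonSeq_injective : Injective (sidonSeq G) := by
  refine .of_lt_imp_ne fun i n hi h => sidonSeq_ne_mul_inv_mul (G := G) hi hi hi ?_
  rw [← h]
  group

theorem sidonSeq_inv_mul_ne {m n m' n' : ℕ} (hmn : m ≠ n) (hlt : max m' n' < max m n) :
    (sidonSeq G m)⁻¹ * sidonSeq G n ≠ (sidonSeq G m')⁻¹ * sidonSeq G n' := by
  set a := sidonSeq G
  intro h
  rcases hmn.lt_or_gt with hmn | hnm
  · refine sidonSeq_ne_mul_inv_mul (G := G) (j := m') (l := n') hmn (by omega) (by omega) ?_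
    calc a n = a m * ((a m)⁻¹ * a n) := by group
      _ = a m * (a m')⁻¹ * a n' := by rw [h]; group
  · refine sidonSeq_ne_mul_inv_mul (G := G) (j := n') (l := m') hnm (by omega) (by omega) ?_
    calc a m = a n * ((a m)⁻¹ * a n)⁻¹ := by group
      _ = a n * (a n')⁻¹ * a m' := by rw [h]; group

theorem finite_setOf_sidonSeq_mul_mem_range {k : G} (hk : k ≠ 1) :
    {n | sidonSeq G n * k ∈ range (sidonSeq G)}.Finite := by
  set a := sidonSeq G
  have inv_mul_eq {m n : ℕ} (h : a m * k = a n) : (a m)⁻¹ * a n = k := by rw [← h]; group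
  have ne_of_mul_eq {m n : ℕ} (h : a m * k = a n) : m ≠ n := by
    rintro rfl
    exact hk (mul_eq_left.1 h)
  rcases eq_empty_or_nonempty {n | a n * k ∈ range a} with h | ⟨m₀, n₀, h₀⟩
  · exact h ▸ finite_empty
  refine (finite_Iic (max m₀ n₀)).subset fun m ⟨n, h⟩ => ?_
  by_contra hm
  refine sidonSeq_inv_mul_ne (G := G) (m' := m₀) (n' := n₀) (ne_of_mul_eq h.symm)
    (by simp only [mem_Iic] at hm; omega) ?_
  rw [inv_mul_eq h.symm, inv_mul_eq h₀.symm]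

end Sidon

section SidonCode

variable {G : Type*} [Group G] [Infinite G]

def sidonCode (s : ℕ → Bool) : Set G :=
  sidonSeq G '' {m | Even m ∨ s (m / 2) = true}

theorem sidonSeq_two_mul_mem_sidonCode (s : ℕ → Bool) (n : ℕ) :
    sidonSeq G (2 * n) ∈ sidonCode s :=
  mem_image_of_mem _ (Or.inl (even_two_mul n))

theorem sidonSeq_two_mul_add_one_mem_sidonCode_iff (s : ℕ → Bool) (n : ℕ) :
    sidonSeq G (2 * n + 1) ∈ sidonCode s ↔ s n = true := by
  rw [sidonCode, sidonSeq_injective.mem_set_image]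
  simp only [mem_ofPred_eq, Nat.not_even_bit1, false_or]
  rw [show (2 * n + 1) / 2 = n by omega]

theorem measurableSet_setOf_mem_sidonCode (g : G) :
    MeasurableSet {s : ℕ → Bool | g ∈ sidonCode s} := by
  simp only [sidonCode, mem_image, mem_ofPred_eq]
  exact measurableSet_setOfPred.2 (by fun_prop)

theorem eq_of_forall_mul_mem_sidonCode_iff {s s' : ℕ → Bool} {h h' : G}
    (H : ∀ g, g * h ∈ sidonCode s ↔ g * h' ∈ sidonCode s') : h = h' ∧ s = s' := by
  have H' (u : G) : u ∈ sidonCode s ↔ u * (h⁻¹ * h') ∈ sidonCode s' := by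
    simpa [mul_assoc] using H (u * h⁻¹)
  have hk : h⁻¹ * h' = 1 := by
    by_contra hk
    refine (finite_setOf_sidonSeq_mul_mem_range hk).not_infinite ?_
    refine (infinite_range_of_injective (mul_right_injective₀ (two_ne_zero' ℕ))).mono ?_
    rintro _ ⟨n, rfl⟩
    exact image_subset_range _ _ ((H' _).1 (sidonSeq_two_mul_mem_sidonCode s n))
  refine ⟨inv_mul_eq_one.1 hk, funext fun n => Bool.eq_iff_iff.2 ?_⟩
  rw [← sidonSeq_two_mul_add_one_mem_sidonCode_iff (G := G), H', hk, mul_one,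
    sidonSeq_two_mul_add_one_mem_sidonCode_iff]

end SidonCode

section Transversal

variable {G X : Type*} [Group G] [MulAction G X]

theorem exists_smul_mem_iff_eq_of_transversal {T : Set X}
    (hfree : ∀ (g : G) (x : X), g • x = x → g = 1)
    (hT : ∀ x : X, ∃! y, y ∈ T ∧ y ∈ MulAction.orbit G x) :
    ∃ c : X → G, ∀ x g, g • x ∈ T ↔ g = c x := by
  suffices ∀ x : X, ∃! g : G, g • x ∈ T by
    choose c hc huniq using this
    exact ⟨c, fun x g => ⟨huniq x g, fun h => h ▸ hc x⟩⟩
  intro x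
  obtain ⟨y, ⟨hyT, g, rfl⟩, hy⟩ := hT x
  refine ⟨g, hyT, fun g' hg' => ?_⟩
  have hgg' : g' • x = g • x := hy _ ⟨hg', MulAction.mem_orbit x g'⟩
  simpa [mul_smul, hgg', inv_mul_eq_one, eq_comm] using hfree (g⁻¹ * g') x

theorem cocycle_smul {T : Set X} {c : X → G} (hc : ∀ x g, g • x ∈ T ↔ g = c x) (x : X) (g : G) :
    c (g • x) = c x * g⁻¹ :=
  ((hc _ _).1 (by rw [smul_smul, inv_mul_cancel_right]; exact (hc x _).2 rfl)).symm

end Transversal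

section Generator

variable {G X : Type*} [Group G] [Infinite G] [MulAction G X] {T : Set X} {c : X → G}
  {β : X → ℕ → Bool}

def sidonCodedSet (c : X → G) (β : X → ℕ → Bool) : Set X :=
  {x | (c x)⁻¹ ∈ sidonCode (β (c x • x))}

theorem smul_mem_sidonCodedSet_iff (hc : ∀ x g, g • x ∈ T ↔ g = c x) (g : G) (x : X) :
    g • x ∈ sidonCodedSet c β ↔ g * (c x)⁻¹ ∈ sidonCode (β (c x • x)) := by
  simp only [sidonCodedSet, mem_ofPred_eq, cocycle_smul hc, mul_inv_rev, inv_inv, mul_smul,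
    inv_smul_smul]

theorem eq_of_forall_smul_mem_sidonCodedSet_iff (hc : ∀ x g, g • x ∈ T ↔ g = c x)
    (hβ : Injective β) {x y : X}
    (h : ∀ g : G, g • x ∈ sidonCodedSet c β ↔ g • y ∈ sidonCodedSet c β) : x = y := by
  simp only [smul_mem_sidonCodedSet_iff hc] at h
  obtain ⟨hcxy, hxy⟩ := eq_of_forall_mul_mem_sidonCode_iff h
  have h_eq : c x • x = c y • y := hβ hxy
  rwa [inv_inj.1 hcxy, smul_left_cancel_iff] at h_eq

theorem measurableSet_sidonCodedSet [Countable G] [MeasurableSpace X]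
    (hc : ∀ x g, g • x ∈ T ↔ g = c x) (hT : MeasurableSet T)
    (hact : ∀ g : G, Measurable fun x : X => g • x) (hβ : Measurable β) :
    MeasurableSet (sidonCodedSet c β) := by
  have h_eq : sidonCodedSet c β = ⋃ g : G, (g • ·) ⁻¹' (T ∩ β ⁻¹' {s | g⁻¹ ∈ sidonCode s}) := by
    ext x
    simp only [sidonCodedSet, mem_iUnion, mem_preimage, mem_inter_iff, hc, mem_ofPred_eq,
      exists_eq_left]
  rw [h_eq]
  exact .iUnion fun g => hact g (hT.inter (hβ (measurableSet_setOf_mem_sidonCode _)))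

end Generator

/-- If a countable group `G` acts freely and smoothly (there is a
Borel transversal meeting every orbit in exactly one point) by Borel automorphisms on a
standard Borel space `X` with all orbits infinite, then `X` admits a Borel
`2`-generator: a Borel set `A` such that the symbolic representation map with respect to
`{A, X \ A}` is injective, i.e. the translates of `A` and `X \ A` separate points. -/
theorem stmt_15 {G X : Type*} [Group G] [Countable G]
    [MeasurableSpace X] [StandardBorelSpace X] [MulAction G X]
    (hact : ∀ g : G, Measurable fun x : X => g • x)
    (hfree : ∀ (g : G) (x : X), g • x = x → g = 1)
    (hsmooth : ∃ T : Set X, MeasurableSet T ∧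
      ∀ x : X, ∃! y, y ∈ T ∧ y ∈ MulAction.orbit G x)
    (hap : ∀ x : X, (MulAction.orbit G x).Infinite) :
    ∃ A : Set X, MeasurableSet A ∧
      ∀ x y : X, (∀ g : G, g • x ∈ A ↔ g • y ∈ A) → x = y := by
  rcases isEmpty_or_nonempty X with _ | ⟨⟨x₀⟩⟩
  · exact ⟨∅, .empty, fun x => isEmptyElim x⟩
  have : Infinite G := ⟨fun _ => hap x₀ (finite_range fun g : G => g • x₀)⟩
  obtain ⟨T, hT, htrans⟩ := hsmooth
  obtain ⟨c, hc⟩ := exists_smul_mem_iff_eq_of_transversal hfree htrans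
  obtain ⟨β, hβ, hβinj⟩ := MeasurableSpace.measurable_injection_nat_bool_of_countablySeparated X
  exact ⟨sidonCodedSet c β, measurableSet_sidonCodedSet hc hT hact hβ,
    fun x y h => eq_of_forall_smul_mem_sidonCodedSet_iff hc hβinj h⟩
end
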